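/- arXiv:1110.3557 — 2 statements merged into one kernel-verified Lean document; each statement's English description precedes it below -/
import Mathlib

section
/- Let {P₀, P₁, P₂} be a symmetric Clifford system (m = 2) on ℝ^{2l} and x ∈ M₊. Write ξ = P₀x and decompose P₁P₂x = U + V + W where U ∈ T₀(ξ), V ∈ T₁(ξ), W ∈ T₋₁(ξ) are the eigenspaces of the shape operator A_ξ for eigenvalues 0, 1, -1 respectively. Then |V| = |W|. -/
/-!
Put `y = P₁P₂x`. The matrix `P₁P₂` is orthogonal and commutes with `P₀`, so
`⟨y, P₀y⟩ = ⟨x, P₀x⟩ = 0`. Anticommutation moves `P₀` across `Pᵢ`, so the tangent eigenvectors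
`V`, `W` of `P₀` are orthogonal to every `Pᵢ P₀ x`, hence to `U = Q P₀ x`. Products of three
generators are `±Pₖ` or antisymmetric, so every `Pᵢ P₀ x` is orthogonal to the normal vectors
`Pⱼ x` of `M₊`; as `P₀ Q P₀` again lies in the span of the `Pᵢ`, `P₀U = (P₀ Q P₀) x` is normal and
`⟨U, P₀U⟩ = 0`. Expanding `⟨y, P₀y⟩` with `P₀V = -V` and `P₀W = W` leaves `|W|² - |V|² = 0`.
-/

open Matrix

namespace Matrix

variable {n R : Type*} [Fintype n] [CommRing R]

theorem IsSymm.dotProduct_mulVec_comm {A : Matrix n n R} (hA : A.IsSymm) (v w : n → R) :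
    v ⬝ᵥ (A *ᵥ w) = (A *ᵥ v) ⬝ᵥ w := by
  rw [dotProduct_mulVec, ← mulVec_transpose, hA.eq]

theorem dotProduct_mulVec_self_eq_zero_of_transpose_eq_neg [NoZeroDivisors R] [CharZero R]
    {M : Matrix n n R} (hM : Mᵀ = -M) (x : n → R) : x ⬝ᵥ (M *ᵥ x) = 0 := by
  rw [← CharZero.eq_neg_self_iff]
  conv_lhs => rw [dotProduct_mulVec, ← mulVec_transpose, hM, neg_mulVec, neg_dotProduct,
    dotProduct_comm]

theorem dotProduct_mulVec_eq_zero_of_mem_span {ι : Type*} {P : ι → Matrix n n R}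
    {Q : Matrix n n R} (hQ : Q ∈ Submodule.span R (Set.range P)) {v z : n → R}
    (hv : ∀ i, v ⬝ᵥ (P i *ᵥ z) = 0) : v ⬝ᵥ (Q *ᵥ z) = 0 := by
  induction hQ using Submodule.span_induction with
  | mem _ h => obtain ⟨i, rfl⟩ := h; exact hv i
  | zero => simp
  | add _ _ _ _ h₁ h₂ => rw [add_mulVec, dotProduct_add, h₁, h₂, add_zero]
  | smul a _ _ h => rw [smul_mulVec, dotProduct_smul, h, smul_zero]

theorem dotProduct_mulVec_add_add_of_eigen {A : Matrix n n R} (hA : A.IsSymm)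
    {U V W : n → R} (hV : A *ᵥ V = -V) (hW : A *ᵥ W = W) (hVU : V ⬝ᵥ U = 0)
    (hWU : W ⬝ᵥ U = 0) (hU : U ⬝ᵥ (A *ᵥ U) = 0) :
    (U + V + W) ⬝ᵥ (A *ᵥ (U + V + W)) = W ⬝ᵥ W - V ⬝ᵥ V := by
  have hVA : V ⬝ᵥ (A *ᵥ U) = 0 := by
    rw [hA.dotProduct_mulVec_comm, hV, neg_dotProduct, hVU, neg_zero]
  have hWA : W ⬝ᵥ (A *ᵥ U) = 0 := by rw [hA.dotProduct_mulVec_comm, hW, hWU]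
  simp only [mulVec_add, hV, hW, dotProduct_add, add_dotProduct, dotProduct_neg, hU, hVA, hWA,
    dotProduct_comm U V, dotProduct_comm U W, hVU, hWU, dotProduct_comm W V]
  ring

theorem dotProduct_mulVec_mulVec_of_commute [DecidableEq n] {A M : Matrix n n R}
    (hM : Mᵀ * M = 1) (hAM : Commute A M) (x : n → R) :
    (M *ᵥ x) ⬝ᵥ (A *ᵥ (M *ᵥ x)) = x ⬝ᵥ (A *ᵥ x) := by
  rw [mulVec_mulVec, hAM.eq, ← mulVec_mulVec, dotProduct_mulVec, ← vecMul_transpose,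
    vecMul_vecMul, hM, vecMul_one]

end Matrix

structure IsSymmCliffordSystem {ι n : Type*} [Fintype n] [DecidableEq n] [DecidableEq ι]
    (P : ι → Matrix n n ℝ) : Prop where
  isSymm : ∀ i, (P i).IsSymm
  anticomm : ∀ i j, P i * P j + P j * P i = if i = j then (2 : ℝ) • (1 : Matrix n n ℝ) else 0

namespace IsSymmCliffordSystem

variable {ι n : Type*} [Fintype n] [DecidableEq n] [DecidableEq ι] {P : ι → Matrix n n ℝ}

theorem mul_self (hP : IsSymmCliffordSystem P) (i : ι) : P i * P i = 1 := by
  have h := hP.anticomm i i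
  rw [if_pos rfl, ← two_smul ℝ] at h
  exact smul_right_injective _ two_ne_zero h

theorem mul_anticomm (hP : IsSymmCliffordSystem P) {i j : ι} (hij : i ≠ j) :
    P i * P j = -(P j * P i) := by
  have h := hP.anticomm i j
  rw [if_neg hij] at h
  exact eq_neg_of_add_eq_zero_left h

theorem mul_mul_self_of_ne (hP : IsSymmCliffordSystem P) {i j : ι} (hij : i ≠ j) :
    P i * P j * P i = -P j := by
  rw [hP.mul_anticomm hij, neg_mul, mul_assoc, hP.mul_self, mul_one]

theorem mul_mul_mem_span (hP : IsSymmCliffordSystem P) (k : ι) {Q : Matrix n n ℝ}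
    (hQ : Q ∈ Submodule.span ℝ (Set.range P)) :
    P k * Q * P k ∈ Submodule.span ℝ (Set.range P) := by
  induction hQ using Submodule.span_induction with
  | mem _ h =>
    obtain ⟨i, rfl⟩ := h
    by_cases hik : k = i
    · rw [hik, hP.mul_self, one_mul]
      exact Submodule.subset_span ⟨i, rfl⟩
    · rw [hP.mul_mul_self_of_ne hik]
      exact Submodule.neg_mem _ (Submodule.subset_span ⟨i, rfl⟩)
  | zero => simp
  | add _ _ _ _ h₁ h₂ => simpa only [mul_add, add_mul] using Submodule.add_mem _ h₁ h₂
  | smul a _ _ h => simpa only [mul_smul_comm, smul_mul_assoc] using Submodule.smul_mem _ a h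

theorem transpose_mul_mul (hP : IsSymmCliffordSystem P) {i j k : ι} (hij : i ≠ j)
    (hjk : j ≠ k) (hik : i ≠ k) : (P i * P j * P k)ᵀ = -(P i * P j * P k) := by
  rw [transpose_mul, transpose_mul, (hP.isSymm i).eq, (hP.isSymm j).eq, (hP.isSymm k).eq,
    ← mul_assoc, hP.mul_anticomm hjk.symm, neg_mul, mul_assoc, hP.mul_anticomm hik.symm,
    mul_neg, ← mul_assoc, hP.mul_anticomm hij.symm, neg_mul, neg_neg]

theorem transpose_mul_mul_self (hP : IsSymmCliffordSystem P) (i j : ι) :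
    (P i * P j)ᵀ * (P i * P j) = 1 := by
  rw [transpose_mul, (hP.isSymm i).eq, (hP.isSymm j).eq, mul_assoc, ← mul_assoc (P i),
    hP.mul_self, one_mul, hP.mul_self]

theorem commute_mul (hP : IsSymmCliffordSystem P) {i j k : ι} (hki : k ≠ i) (hkj : k ≠ j) :
    Commute (P k) (P i * P j) := by
  rw [Commute, SemiconjBy, ← mul_assoc, hP.mul_anticomm hki, neg_mul, mul_assoc,
    hP.mul_anticomm hkj, mul_neg, neg_neg, mul_assoc]

theorem dotProduct_mulVec_mulVec_mulVec_eq_zero (hP : IsSymmCliffordSystem P) {x : n → ℝ}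
    (hx : ∀ i, (P i *ᵥ x) ⬝ᵥ x = 0) (i j k : ι) : (P j *ᵥ x) ⬝ᵥ (P i *ᵥ (P k *ᵥ x)) = 0 := by
  have hx' : ∀ i, x ⬝ᵥ (P i *ᵥ x) = 0 := fun i => by rw [dotProduct_comm, hx]
  rw [← (hP.isSymm j).dotProduct_mulVec_comm, mulVec_mulVec, mulVec_mulVec]
  by_cases hji : j = i
  · rw [hji, hP.mul_self, one_mul, hx']
  by_cases hik : i = k
  · rw [hik, mul_assoc, hP.mul_self, mul_one, hx']
  by_cases hjk : j = k
  · rw [hjk, hP.mul_mul_self_of_ne (Ne.symm hik), neg_mulVec, dotProduct_neg, hx', neg_zero]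
  exact dotProduct_mulVec_self_eq_zero_of_transpose_eq_neg (hP.transpose_mul_mul hji hik hjk) x

theorem dotProduct_mulVec_mulVec_eq_zero_of_eigen (hP : IsSymmCliffordSystem P) {x v : n → ℝ}
    {k : ι} {c : ℝ} (hvx : v ⬝ᵥ x = 0) (hvP : ∀ i, v ⬝ᵥ (P i *ᵥ x) = 0)
    (hv : P k *ᵥ v = c • v) (i : ι) : v ⬝ᵥ (P i *ᵥ (P k *ᵥ x)) = 0 := by
  rw [mulVec_mulVec]
  by_cases hik : i = k
  · rw [hik, hP.mul_self, one_mulVec, hvx]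
  · rw [hP.mul_anticomm hik, neg_mulVec, ← mulVec_mulVec, dotProduct_neg,
      (hP.isSymm k).dotProduct_mulVec_comm, hv, smul_dotProduct, hvP, smul_zero, neg_zero]

end IsSymmCliffordSystem

theorem stmt_7_general (l : ℕ) (P : Fin 3 → Matrix (Fin (2 * l)) (Fin (2 * l)) ℝ)
    (hsymm : ∀ i, (P i).IsSymm)
    (hcl : ∀ i j, P i * P j + P j * P i =
      if i = j then (2 : ℝ) • (1 : Matrix (Fin (2 * l)) (Fin (2 * l)) ℝ) else 0)
    (x : Fin (2 * l) → ℝ) (hMx : ∀ i, (P i *ᵥ x) ⬝ᵥ x = 0)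
    (U V W : Fin (2 * l) → ℝ)
    -- U ∈ T₀(ξ): U = Q P₀ x with Q in the span of {P₀, P₁, P₂} and ⟨Q, P₀⟩ = 0
    (hU : ∃ Q ∈ Submodule.span ℝ (Set.range P),
      (Q * P 0).trace = 0 ∧ U = Q *ᵥ (P 0 *ᵥ x))
    -- V ∈ T₁(ξ) = E₋ ∩ T_x M₊
    (hV₁ : P 0 *ᵥ V = -V) (hV₂ : V ⬝ᵥ x = 0) (hV₃ : ∀ i, V ⬝ᵥ (P i *ᵥ x) = 0)
    -- W ∈ T₋₁(ξ) = E₊ ∩ T_xM₊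
    (hW₁ : P 0 *ᵥ W = W) (hW₂ : W ⬝ᵥ x = 0) (hW₃ : ∀ i, W ⬝ᵥ (P i *ᵥ x) = 0)
    (hdec : (P 1 * P 2) *ᵥ x = U + V + W) :
    V ⬝ᵥ V = W ⬝ᵥ W := by
  have hP : IsSymmCliffordSystem P := ⟨hsymm, hcl⟩
  obtain ⟨Q, hQ, -, rfl⟩ := hU
  have hVU : V ⬝ᵥ (Q *ᵥ (P 0 *ᵥ x)) = 0 := dotProduct_mulVec_eq_zero_of_mem_span hQ
    (hP.dotProduct_mulVec_mulVec_eq_zero_of_eigen hV₂ hV₃ (by rw [hV₁, neg_one_smul]))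
  have hWU : W ⬝ᵥ (Q *ᵥ (P 0 *ᵥ x)) = 0 := dotProduct_mulVec_eq_zero_of_mem_span hQ
    (hP.dotProduct_mulVec_mulVec_eq_zero_of_eigen hW₂ hW₃ (by rw [hW₁, one_smul]))
  have hUU : (Q *ᵥ (P 0 *ᵥ x)) ⬝ᵥ (P 0 *ᵥ (Q *ᵥ (P 0 *ᵥ x))) = 0 := by
    have hP₀U : P 0 *ᵥ (Q *ᵥ (P 0 *ᵥ x)) = (P 0 * Q * P 0) *ᵥ x := by
      simp only [mulVec_mulVec, mul_assoc]
    rw [hP₀U]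
    refine dotProduct_mulVec_eq_zero_of_mem_span (hP.mul_mul_mem_span 0 hQ) fun j => ?_
    rw [dotProduct_comm]
    exact dotProduct_mulVec_eq_zero_of_mem_span hQ
      (hP.dotProduct_mulVec_mulVec_mulVec_eq_zero hMx · j 0)
  have hy := dotProduct_mulVec_mulVec_of_commute (hP.transpose_mul_mul_self 1 2)
    (hP.commute_mul (k := 0) (i := 1) (j := 2) (by decide) (by decide)) x
  rw [hdec, dotProduct_mulVec_add_add_of_eigen (hP.isSymm 0) hV₁ hW₁ hVU hWU hUU,
    dotProduct_comm x, hMx] at hy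
  linarith

/-- Let `{P₀, P₁, P₂}` be a symmetric Clifford system (`m = 2`) on `ℝ^{2l}`
and `x ∈ M₊`.  With `ξ = P₀x`, decompose `P₁P₂x = U + V + W` where `U ∈ T₀(ξ)`
(`U = Q P₀ x` with `Q` in the span of the system and `⟨Q, P₀⟩ = 0`),
`V ∈ T₁(ξ) = E₋ ∩ T_xM₊` and `W ∈ T₋₁(ξ) = E₊ ∩ T_xM₊`.  Then `|V| = |W|`. -/
theorem stmt_7 (l : ℕ) (P : Fin 3 → Matrix (Fin (2 * l)) (Fin (2 * l)) ℝ)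
    (hsymm : ∀ i, (P i).IsSymm)
    (hcl : ∀ i j, P i * P j + P j * P i =
      if i = j then (2 : ℝ) • (1 : Matrix (Fin (2 * l)) (Fin (2 * l)) ℝ) else 0)
    (x : Fin (2 * l) → ℝ) (hx : x ⬝ᵥ x = 1) (hMx : ∀ i, (P i *ᵥ x) ⬝ᵥ x = 0)
    (U V W : Fin (2 * l) → ℝ)
    -- U ∈ T₀(ξ): U = Q P₀ x with Q in the span of {P₀, P₁, P₂} and ⟨Q, P₀⟩ = 0
    (hU : ∃ Q ∈ Submodule.span ℝ (Set.range P),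
      (Q * P 0).trace = 0 ∧ U = Q *ᵥ (P 0 *ᵥ x))
    -- V ∈ T₁(ξ) = E₋ ∩ T_x M₊
    (hV₁ : P 0 *ᵥ V = -V) (hV₂ : V ⬝ᵥ x = 0) (hV₃ : ∀ i, V ⬝ᵥ (P i *ᵥ x) = 0)
    -- W ∈ T₋₁(ξ) = E₊ ∩ T_x M₊
    (hW₁ : P 0 *ᵥ W = W) (hW₂ : W ⬝ᵥ x = 0) (hW₃ : ∀ i, W ⬝ᵥ (P i *ᵥ x) = 0)
    (hdec : (P 1 * P 2) *ᵥ x = U + V + W) :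
    V ⬝ᵥ V = W ⬝ᵥ W :=
  stmt_7_general l P hsymm hcl x hMx U V W hU hV₁ hV₂ hV₃ hW₁ hW₂ hW₃ hdec
end

section
/- Let F(x) = |x|⁴ - 2 Σ_{i=0}^{m} ⟨P_i x, x⟩² for a symmetric Clifford system {P₀,...,P_m} on ℝ^{2l}, and f = F restricted to S^{2l-1}. Then |∇f|² = 16(1 - f²), where ∇f is the spherical gradient. -/
/-!
With `sᵢ = ⟪Pᵢ x, x⟫`, the Euclidean gradient is `∇F = 4‖x‖²x - 8 ∑ sᵢ Pᵢ x`. Since `F` is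
homogeneous of degree 4, Euler's identity gives `⟪∇F, x⟫ = 4F`. The Clifford relations make the
vectors `Pᵢ x` orthonormal when `‖x‖ = 1`, so `‖∑ sᵢ Pᵢ x‖² = ⟪x, ∑ sᵢ Pᵢ x⟫ = ∑ sᵢ²` and hence
`‖∇F‖² = 16` on the sphere. The tangential part therefore has squared norm `16 - (4F)²`.
-/

open scoped RealInnerProductSpace

section
variable {E : Type*} [NormedAddCommGroup E] [InnerProductSpace ℝ E] {ι : Type*}

lemma norm_sub_inner_smul_sq_of_norm_eq_one (g : E) {x : E} (hx : ‖x‖ = 1) :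
    ‖g - ⟪g, x⟫ • x‖ ^ 2 = ‖g‖ ^ 2 - ⟪g, x⟫ ^ 2 := by
  rw [norm_sub_sq_real, norm_smul, real_inner_smul_right, hx, mul_one, Real.norm_eq_abs, sq_abs]
  ring

lemma hasFDerivAt_inner_apply_self_sq {T : E →L[ℝ] E} (hT : (T : E →ₗ[ℝ] E).IsSymmetric)
    (x : E) :
    HasFDerivAt (fun y => ⟪T y, y⟫ ^ 2) ((4 * ⟪T x, x⟫) • innerSL ℝ (T x)) x := by
  have h := (hT.hasStrictFDerivAt_reApplyInnerSelf x).hasFDerivAt.pow 2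
  simp only [ContinuousLinearMap.reApplyInnerSelf, RCLike.re_to_real] at h
  refine h.congr_fderiv ?_
  ext v
  simp only [Nat.add_one_sub_one, pow_one, nsmul_eq_mul, Nat.cast_ofNat, smul_apply,
    coe_innerSL_apply, smul_eq_mul]
  ring

/-- The Ferus–Karcher–Münzner polynomial. -/
noncomputable def fkmPolynomial [Fintype ι] (A : ι → E →L[ℝ] E) (x : E) : ℝ :=
  ‖x‖ ^ 4 - 2 * ∑ i, ⟪A i x, x⟫ ^ 2

variable {A : ι → E →L[ℝ] E}

lemma hasGradientAt_fkmPolynomial [Fintype ι] [CompleteSpace E]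
    (hA : ∀ i, (A i : E →ₗ[ℝ] E).IsSymmetric) (x : E) :
    HasGradientAt (fkmPolynomial A)
      ((4 * ‖x‖ ^ 2) • x - (8 : ℝ) • ∑ i, ⟪A i x, x⟫ • A i x) x := by
  have hnorm := (hasStrictFDerivAt_norm_sq x).hasFDerivAt.pow 2
  have hsum := HasFDerivAt.fun_sum (u := Finset.univ)
    (fun i _ => hasFDerivAt_inner_apply_self_sq (hA i) x)
  rw [hasGradientAt_iff_hasFDerivAt]
  unfold fkmPolynomial
  simp only [← pow_mul] at hnorm
  refine (hnorm.sub (hsum.const_mul 2)).congr_fderiv ?_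
  ext v
  simp only [Nat.add_one_sub_one, mul_one, nsmul_eq_mul, Nat.cast_ofNat, sub_apply, smul_apply,
    coe_innerSL_apply, smul_eq_mul, sum_apply, Finset.mul_sum, map_sub, map_smul, map_sum,
    InnerProductSpace.toDual_apply_apply]
  ring_nf

lemma inner_gradient_fkmPolynomial_self [Fintype ι] [CompleteSpace E]
    (hA : ∀ i, (A i : E →ₗ[ℝ] E).IsSymmetric) (x : E) :
    ⟪gradient (fkmPolynomial A) x, x⟫ = 4 * fkmPolynomial A x := by
  rw [(hasGradientAt_fkmPolynomial hA x).gradient, fkmPolynomial]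
  simp only [inner_sub_left, real_inner_smul_left, sum_inner, real_inner_self_eq_norm_sq, ← sq]
  ring

lemma two_mul_inner_apply_apply {S T : E →L[ℝ] E} (hS : (S : E →ₗ[ℝ] E).IsSymmetric)
    (hT : (T : E →ₗ[ℝ] E).IsSymmetric) (x : E) :
    2 * ⟪S x, T x⟫ = ⟪(S * T + T * S) x, x⟫ := by
  have hST : ⟪S x, T x⟫ = ⟪S (T x), x⟫ := (hS x (T x)).trans (real_inner_comm _ _)
  have hTS : ⟪S x, T x⟫ = ⟪T (S x), x⟫ := (hT (S x) x).symm
  simp only [add_apply, mul_apply_eq_comp, inner_add_left]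
  linarith

lemma inner_apply_apply_of_clifford [DecidableEq ι] (hA : ∀ i, (A i : E →ₗ[ℝ] E).IsSymmetric)
    (hcl : ∀ i j, A i * A j + A j * A i = if i = j then 2 else 0) (i j : ι) (x : E) :
    ⟪A i x, A j x⟫ = if i = j then ‖x‖ ^ 2 else 0 := by
  have h := two_mul_inner_apply_apply (hA i) (hA j) x
  rw [hcl] at h
  split_ifs at h ⊢
  · simp only [ContinuousLinearMap.ofNat_apply, two_smul, inner_add_left,
      real_inner_self_eq_norm_sq] at h
    linarith
  · simpa using h

lemma norm_gradient_fkmPolynomial_sq [Fintype ι] [DecidableEq ι] [CompleteSpace E]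
    (hA : ∀ i, (A i : E →ₗ[ℝ] E).IsSymmetric)
    (hcl : ∀ i j, A i * A j + A j * A i = if i = j then 2 else 0) (x : E) :
    ‖gradient (fkmPolynomial A) x‖ ^ 2 = 16 * ‖x‖ ^ 6 := by
  rw [(hasGradientAt_fkmPolynomial hA x).gradient]
  set s : ι → ℝ := fun i => ⟪A i x, x⟫
  set T : E := ∑ i, s i • A i x
  have hxT : ⟪x, T⟫ = ∑ i, s i ^ 2 := by
    simp [T, s, inner_sum, real_inner_smul_right, real_inner_comm x, sq]
  have hTT : ‖T‖ ^ 2 = ‖x‖ ^ 2 * ∑ i, s i ^ 2 := by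
    rw [← real_inner_self_eq_norm_sq, Finset.mul_sum]
    simp only [T, sum_inner, inner_sum, real_inner_smul_left, real_inner_smul_right,
      inner_apply_apply_of_clifford hA hcl, mul_ite, mul_zero, Finset.sum_ite_eq',
      Finset.mem_univ, if_true]
    exact Finset.sum_congr rfl fun i _ => by ring
  rw [norm_sub_sq_real, norm_smul, norm_smul, real_inner_smul_left, real_inner_smul_right, hxT,
    mul_pow, mul_pow, hTT, Real.norm_eq_abs, Real.norm_eq_abs, sq_abs, sq_abs]
  ring

end

/-- For the FKM polynomial `F(x) = |x|⁴ - 2 Σ_i ⟨P_i x, x⟩²` of a symmetric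
Clifford system `{P₀,...,P_m}` on `ℝ^{2l}`, the restriction `f = F|_{S^{2l-1}}` satisfies
`|∇f|² = 16(1 - f²)`, where `∇f` is the spherical gradient, i.e. the tangential component
of the Euclidean gradient of `F`. -/
theorem stmt_13 (m l : ℕ) (P : Fin (m + 1) → Matrix (Fin (2 * l)) (Fin (2 * l)) ℝ)
    (hsymm : ∀ i, (P i).IsSymm)
    (hcl : ∀ i j, P i * P j + P j * P i =
      if i = j then (2 : ℝ) • (1 : Matrix (Fin (2 * l)) (Fin (2 * l)) ℝ) else 0)
    (F : EuclideanSpace ℝ (Fin (2 * l)) → ℝ)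
    (hF : ∀ x, F x = ‖x‖ ^ 4 -
      2 * ∑ i, ⟪Matrix.toEuclideanLin (P i) x, x⟫ ^ 2)
    (x : EuclideanSpace ℝ (Fin (2 * l))) (hx : ‖x‖ = 1) :
    ‖gradient F x - ⟪gradient F x, x⟫ • x‖ ^ 2 = 16 * (1 - (F x) ^ 2) := by
  let A i := Matrix.toEuclideanCLM (𝕜 := ℝ) (P i)
  have hA (i) : (A i : EuclideanSpace ℝ (Fin (2 * l)) →ₗ[ℝ] _).IsSymmetric :=
    Matrix.isSymmetric_toEuclideanLin_iff.mpr (Matrix.isHermitian_iff_isSymm.mpr (hsymm i))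
  have hAcl : ∀ i j, A i * A j + A j * A i = if i = j then 2 else 0 := fun i j => by
    simp only [A, ← map_mul, ← map_add, hcl]
    split_ifs <;> ext1 v <;> simp [two_smul]
  obtain rfl : F = fkmPolynomial A := funext hF
  rw [norm_sub_inner_smul_sq_of_norm_eq_one _ hx, norm_gradient_fkmPolynomial_sq hA hAcl,
    inner_gradient_fkmPolynomial_self hA, hx]
  ring
end
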